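/- arXiv:2506.03893 — 9 statements merged into one kernel-verified Lean document; each statement's English description precedes it below -/
import Mathlib

section
/- Let r and s be finite sets with r ∪ s nonempty and let t be a real number with 0 < t ≤ 1. If Jaccard(r,s) ≥ t, then t·|r| ≤ |s| and |s| ≤ |r|/t. -/
open Finset

/-- Jaccard similarity of two finite sets. -/
noncomputable def jaccard {α : Type*} [DecidableEq α] (r s : Finset α) : ℝ :=
  ((r ∩ s).card : ℝ) / ((r ∪ s).card : ℝ)

/-- Length filter for Jaccard (real bounds): if `Jaccard(r,s) ≥ t` then
`t·|r| ≤ |s|` and `|s| ≤ |r|/t`. -/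
theorem length_filter_jaccard {α : Type*} [DecidableEq α] (r s : Finset α) (t : ℝ)
    (hne : (r ∪ s).Nonempty) (ht0 : 0 < t) (ht1 : t ≤ 1)
    (h : jaccard r s ≥ t) :
    t * (r.card : ℝ) ≤ (s.card : ℝ) ∧ (s.card : ℝ) ≤ (r.card : ℝ) / t := by
  have hu : (0 : ℝ) < ((r ∪ s).card : ℝ) := by
    exact_mod_cast Finset.card_pos.mpr hne
  have key : t * ((r ∪ s).card : ℝ) ≤ ((r ∩ s).card : ℝ) :=
    (le_div_iff₀ hu).mp h
  have hrs : ((r ∩ s).card : ℝ) ≤ (s.card : ℝ) := by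
    exact_mod_cast Finset.card_le_card (Finset.inter_subset_right)
  have hrr : ((r ∩ s).card : ℝ) ≤ (r.card : ℝ) := by
    exact_mod_cast Finset.card_le_card (Finset.inter_subset_left)
  have hru : (r.card : ℝ) ≤ ((r ∪ s).card : ℝ) := by
    exact_mod_cast Finset.card_le_card (Finset.subset_union_left)
  have hsu : (s.card : ℝ) ≤ ((r ∪ s).card : ℝ) := by
    exact_mod_cast Finset.card_le_card (Finset.subset_union_right)
  constructor
  · nlinarith
  · rw [le_div_iff₀ ht0]
    nlinarith
end

section
/- Let r and s be finite sets with r ∪ s nonempty and let t be a real number with 0 < t ≤ 1. If Jaccard(r,s) ≥ t, then ⌈t·|r|⌉ ≤ |s| and |s| ≤ ⌊|r|/t⌋, where the bounds are taken as natural numbers (ceiling and floor of the real values t·|r| and |r|/t). -/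
open Finset

/-- Length filter for Jaccard (integer bounds): if `Jaccard(r,s) ≥ t` then
`⌈t·|r|⌉ ≤ |s|` and `|s| ≤ ⌊|r|/t⌋`, the bounds taken as natural numbers. -/
theorem length_filter_jaccard_int {α : Type*} [DecidableEq α] (r s : Finset α) (t : ℝ)
    (hne : (r ∪ s).Nonempty) (ht0 : 0 < t) (ht1 : t ≤ 1)
    (h : jaccard r s ≥ t) :
    ⌈t * (r.card : ℝ)⌉₊ ≤ s.card ∧ s.card ≤ ⌊(r.card : ℝ) / t⌋₊ := by
  have hu : (0:ℝ) < ((r ∪ s).card : ℝ) := by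
    exact_mod_cast Finset.card_pos.mpr hne
  have hmain : t * ((r ∪ s).card : ℝ) ≤ ((r ∩ s).card : ℝ) := by
    have h' : t ≤ ((r ∩ s).card : ℝ) / ((r ∪ s).card : ℝ) := h
    calc t * ((r ∪ s).card : ℝ) ≤ (((r ∩ s).card : ℝ) / ((r ∪ s).card : ℝ)) * ((r ∪ s).card : ℝ) := by
          exact mul_le_mul_of_nonneg_right h' (le_of_lt hu)
      _ = ((r ∩ s).card : ℝ) := by field_simp
  have hiu : ((r ∩ s).card : ℝ) ≤ ((r ∩ s).card : ℝ) := le_refl _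
  have his : ((r ∩ s).card : ℝ) ≤ (s.card : ℝ) := by
    exact_mod_cast Finset.card_le_card (Finset.inter_subset_right)
  have hir : ((r ∩ s).card : ℝ) ≤ (r.card : ℝ) := by
    exact_mod_cast Finset.card_le_card (Finset.inter_subset_left)
  have hru : (r.card : ℝ) ≤ ((r ∪ s).card : ℝ) := by
    exact_mod_cast Finset.card_le_card (Finset.subset_union_left)
  have hsu : (s.card : ℝ) ≤ ((r ∪ s).card : ℝ) := by
    exact_mod_cast Finset.card_le_card (Finset.subset_union_right)
  constructor
  · apply Nat.ceil_le.mpr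
    have : t * (r.card : ℝ) ≤ (s.card : ℝ) := by nlinarith
    exact this
  · apply Nat.le_floor
    rw [le_div_iff₀ ht0]
    nlinarith
end

section
/- Let r and s be nonempty finite sets and let t be a real number with 0 < t ≤ 1. If Cosine(r,s) ≥ t, then t²·|r| ≤ |s| and |s| ≤ |r|/t². -/
open Finset

/-- Cosine similarity of two finite sets. -/
noncomputable def cosineSim {α : Type*} [DecidableEq α] (r s : Finset α) : ℝ :=
  ((r ∩ s).card : ℝ) / Real.sqrt ((r.card : ℝ) * (s.card : ℝ))

/-- Length filter for Cosine: if `Cosine(r,s) ≥ t` then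
`t²·|r| ≤ |s|` and `|s| ≤ |r|/t²`. -/
theorem length_filter_cosine {α : Type*} [DecidableEq α] (r s : Finset α) (t : ℝ)
    (hr : r.Nonempty) (hs : s.Nonempty) (ht0 : 0 < t) (ht1 : t ≤ 1)
    (h : cosineSim r s ≥ t) :
    t ^ 2 * (r.card : ℝ) ≤ (s.card : ℝ) ∧ (s.card : ℝ) ≤ (r.card : ℝ) / t ^ 2 := by
  have hrc : (0 : ℝ) < r.card := by exact_mod_cast hr.card_pos
  have hsc : (0 : ℝ) < s.card := by exact_mod_cast hs.card_pos
  have hprod : (0 : ℝ) < (r.card : ℝ) * (s.card : ℝ) := mul_pos hrc hsc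
  have hsq : Real.sqrt ((r.card : ℝ) * (s.card : ℝ)) > 0 := Real.sqrt_pos.mpr hprod
  have hmain : t * Real.sqrt ((r.card : ℝ) * (s.card : ℝ)) ≤ ((r ∩ s).card : ℝ) := by
    have h' : t ≤ ((r ∩ s).card : ℝ) / Real.sqrt ((r.card : ℝ) * (s.card : ℝ)) := h
    have := (le_div_iff₀ hsq).mp h'
    linarith
  have hsq2 : (t * Real.sqrt ((r.card : ℝ) * (s.card : ℝ)))^2 ≤ ((r ∩ s).card : ℝ)^2 := by
    apply pow_le_pow_left₀ (by positivity) hmain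
  have hsqsq : (Real.sqrt ((r.card : ℝ) * (s.card : ℝ)))^2 = (r.card : ℝ) * (s.card : ℝ) :=
    Real.sq_sqrt hprod.le
  have hkey : t^2 * ((r.card : ℝ) * (s.card : ℝ)) ≤ ((r ∩ s).card : ℝ)^2 := by
    calc t^2 * ((r.card : ℝ) * (s.card : ℝ)) = (t * Real.sqrt ((r.card : ℝ) * (s.card : ℝ)))^2 := by
          rw [mul_pow, hsqsq]
      _ ≤ _ := hsq2
  have hils : ((r ∩ s).card : ℝ) ≤ (s.card : ℝ) := by
    exact_mod_cast card_le_card (inter_subset_right)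
  have hilr : ((r ∩ s).card : ℝ) ≤ (r.card : ℝ) := by
    exact_mod_cast card_le_card (inter_subset_left)
  have hi0 : (0 : ℝ) ≤ ((r ∩ s).card : ℝ) := by positivity
  constructor
  · -- t^2 * r.card * s.card ≤ |r∩s|^2 ≤ s.card^2, divide by s.card
    nlinarith [sq_nonneg ((s.card : ℝ) - ((r ∩ s).card : ℝ))]
  · rw [le_div_iff₀ (by positivity)]
    nlinarith [sq_nonneg ((r.card : ℝ) - ((r ∩ s).card : ℝ))]
end

section
/- Let r and s be finite sets with |r| + |s| > 0 and let t be a real number with 0 < t ≤ 1. If Dice(r,s) ≥ t, then t·|r|/(2−t) ≤ |s| and |s| ≤ (2−t)·|r|/t. -/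
open Finset

/-- Dice similarity of two finite sets. -/
noncomputable def diceSim {α : Type*} [DecidableEq α] (r s : Finset α) : ℝ :=
  (2 * ((r ∩ s).card : ℝ)) / ((r.card : ℝ) + (s.card : ℝ))

/-- Length filter for Dice: if `Dice(r,s) ≥ t` then
`t·|r|/(2−t) ≤ |s|` and `|s| ≤ (2−t)·|r|/t`. -/
theorem length_filter_dice {α : Type*} [DecidableEq α] (r s : Finset α) (t : ℝ)
    (hcard : 0 < r.card + s.card) (ht0 : 0 < t) (ht1 : t ≤ 1)
    (h : diceSim r s ≥ t) :
    t * (r.card : ℝ) / (2 - t) ≤ (s.card : ℝ) ∧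
      (s.card : ℝ) ≤ (2 - t) * (r.card : ℝ) / t := by
  have hsum : (0 : ℝ) < (r.card : ℝ) + (s.card : ℝ) := by exact_mod_cast hcard
  have h2t : (0 : ℝ) < 2 - t := by linarith
  unfold diceSim at h
  have hkey : t * ((r.card : ℝ) + (s.card : ℝ)) ≤ 2 * ((r ∩ s).card : ℝ) :=
    (le_div_iff₀ hsum).mp h
  have hr : ((r ∩ s).card : ℝ) ≤ (r.card : ℝ) := by
    exact_mod_cast Finset.card_le_card (Finset.inter_subset_left)
  have hs : ((r ∩ s).card : ℝ) ≤ (s.card : ℝ) := by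
    exact_mod_cast Finset.card_le_card (Finset.inter_subset_right)
  constructor
  · rw [div_le_iff₀ h2t]; nlinarith
  · rw [le_div_iff₀ ht0]; nlinarith
end

section
/- Let t be a real number with 0 < t ≤ 1, let r be a finite set, and let s₀, s₁, …, s_{m−1} be a finite sequence of finite sets whose cardinalities are nondecreasing (|s_j| ≤ |s_{j+1}| for all j < m−1). If for some index i we have |s_i| > |r|/t, then for every index j with i ≤ j < m we have |s_j| > |r|/t and consequently Jaccard(r, s_j) < t. -/
open Finset

/-- Safety of early termination (Theorem 1): along a path of sets with nondecreasing
cardinalities, once some set exceeds the upper length bound `|r|/t`, every later set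
also exceeds it, and hence its Jaccard similarity with `r` is below `t`. -/
theorem early_termination_safe {α : Type*} [DecidableEq α] (t : ℝ)
    (ht0 : 0 < t) (ht1 : t ≤ 1) (r : Finset α) (m : ℕ) (s : Fin m → Finset α)
    (hmono : ∀ j : Fin m, ∀ hj : (j : ℕ) + 1 < m, (s j).card ≤ (s ⟨(j : ℕ) + 1, hj⟩).card)
    (i : Fin m) (hi : ((s i).card : ℝ) > (r.card : ℝ) / t) :
    ∀ j : Fin m, i ≤ j →
      ((s j).card : ℝ) > (r.card : ℝ) / t ∧ jaccard r (s j) < t := by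
  -- monotonicity along the path
  have key : ∀ k : ℕ, ∀ h : (i : ℕ) + k < m,
      (s i).card ≤ (s ⟨(i : ℕ) + k, h⟩).card := by
    intro k
    induction k with
    | zero => intro h; simp
    | succ n ih =>
      intro h
      have h' : (i : ℕ) + n < m := by omega
      have := hmono ⟨(i : ℕ) + n, h'⟩ (by show (i : ℕ) + n + 1 < m; omega)
      exact le_trans (ih h') (by exact this)
  intro j hij
  have hmono' : (s i).card ≤ (s j).card := by
    have hk : (j : ℕ) = (i : ℕ) + ((j : ℕ) - (i : ℕ)) := by
      have : (i : ℕ) ≤ (j : ℕ) := hij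
      omega
    have hlt : (i : ℕ) + ((j : ℕ) - (i : ℕ)) < m := by omega
    have hje : j = ⟨(i : ℕ) + ((j : ℕ) - (i : ℕ)), hlt⟩ := by
      apply Fin.ext; simp; omega
    rw [hje]
    exact key ((j : ℕ) - (i : ℕ)) hlt
  have hjgt : ((s j).card : ℝ) > (r.card : ℝ) / t :=
    lt_of_lt_of_le hi (by exact_mod_cast hmono')
  refine ⟨hjgt, ?_⟩
  have hr0 : (0:ℝ) ≤ (r.card : ℝ) / t := div_nonneg (by positivity) ht0.le
  have hspos : (0:ℝ) < ((s j).card : ℝ) := lt_of_le_of_lt hr0 hjgt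
  have hupos : (0:ℝ) < ((r ∪ s j).card : ℝ) := by
    have : (s j).card ≤ (r ∪ s j).card := card_le_card subset_union_right
    exact lt_of_lt_of_le hspos (by exact_mod_cast this)
  have hrlt : (r.card : ℝ) < t * ((s j).card : ℝ) := by
    have := (div_lt_iff₀ ht0).mp hjgt
    linarith
  have hint : ((r ∩ s j).card : ℝ) ≤ (r.card : ℝ) := by
    exact_mod_cast card_le_card inter_subset_left
  have hsu : ((s j).card : ℝ) ≤ ((r ∪ s j).card : ℝ) := by
    exact_mod_cast card_le_card subset_union_right
  have : ((r ∩ s j).card : ℝ) < t * ((r ∪ s j).card : ℝ) := by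
    calc ((r ∩ s j).card : ℝ) ≤ (r.card : ℝ) := hint
    _ < t * ((s j).card : ℝ) := hrlt
    _ ≤ t * ((r ∪ s j).card : ℝ) := by nlinarith
  unfold jaccard
  rw [div_lt_iff₀ hupos]
  linarith
end

section
/- Let r and s be finite sets with r ∪ s nonempty and let t be a real number with 0 < t ≤ 1. If |s| < t·|r| or |s| > |r|/t, then Jaccard(r,s) < t. -/
open Finset

/-- Contrapositive of the length filter for Jaccard: if `|s| < t·|r|` or
`|s| > |r|/t`, then `Jaccard(r,s) < t`. -/
theorem length_filter_contrapositive {α : Type*} [DecidableEq α] (r s : Finset α) (t : ℝ)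
    (hne : (r ∪ s).Nonempty) (ht0 : 0 < t) (ht1 : t ≤ 1)
    (h : (s.card : ℝ) < t * (r.card : ℝ) ∨ (s.card : ℝ) > (r.card : ℝ) / t) :
    jaccard r s < t := by
  have hu : (0:ℝ) < ((r ∪ s).card : ℝ) := by
    exact_mod_cast Finset.card_pos.mpr hne
  have hrs : ((r ∩ s).card : ℝ) ≤ (s.card : ℝ) := by
    exact_mod_cast Finset.card_le_card (Finset.inter_subset_right)
  have hrr : ((r ∩ s).card : ℝ) ≤ (r.card : ℝ) := by
    exact_mod_cast Finset.card_le_card (Finset.inter_subset_left)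
  have hru : ((r.card : ℝ)) ≤ ((r ∪ s).card : ℝ) := by
    exact_mod_cast Finset.card_le_card (Finset.subset_union_left)
  have hsu : ((s.card : ℝ)) ≤ ((r ∪ s).card : ℝ) := by
    exact_mod_cast Finset.card_le_card (Finset.subset_union_right)
  have key : ((r ∩ s).card : ℝ) < t * ((r ∪ s).card : ℝ) := by
    rcases h with h1 | h2
    · calc ((r ∩ s).card : ℝ) ≤ (s.card : ℝ) := hrs
        _ < t * (r.card : ℝ) := h1
        _ ≤ t * ((r ∪ s).card : ℝ) := by nlinarith
    · have : (r.card : ℝ) < t * (s.card : ℝ) := by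
        rw [gt_iff_lt, div_lt_iff₀ ht0] at h2; linarith
      calc ((r ∩ s).card : ℝ) ≤ (r.card : ℝ) := hrr
        _ < t * (s.card : ℝ) := this
        _ ≤ t * ((r ∪ s).card : ℝ) := by nlinarith
  rw [jaccard, div_lt_iff₀ hu]
  linarith
end

section
/- Let R and S be finite collections of finite sets, let t be a real number with 0 < t ≤ 1, and assume every pair (r,s) ∈ R × S has r ∪ s nonempty. Let [λ_{b,1}, λ_{e,1}], …, [λ_{b,k}, λ_{e,k}] be pairwise disjoint integer intervals such that for every s ∈ S there exists an index i with λ_{b,i} ≤ |s| ≤ λ_{e,i}. For each i define output_i = { (r,s) ∈ R × S : λ_{b,i} ≤ |s| ≤ λ_{e,i}, the intervals [λ_{b,i}, λ_{e,i}] and [⌈t·|r|⌉, ⌊|r|/t⌋] intersect, and Jaccard(r,s) ≥ t }. Then the union of output_1, …, output_k equals { (r,s) ∈ R × S : Jaccard(r,s) ≥ t }. -/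
open Finset

/-- Completeness of the Map-phase routing of MR-CF-RS-Join: if the set lengths of `S`
are covered by pairwise disjoint integer intervals `[lo i, hi i]` (one per reducer),
and reducer `i` outputs the similar pairs `(r,s)` with `lo i ≤ |s| ≤ hi i` such that
`[lo i, hi i]` intersects the length-filter range `[⌈t·|r|⌉, ⌊|r|/t⌋]`, then the union
of all reducer outputs is exactly the R-S set similarity join at threshold `t`. -/
theorem map_routing_complete {α : Type*} [DecidableEq α]
    (R S : Finset (Finset α)) (t : ℝ) (ht0 : 0 < t) (ht1 : t ≤ 1)
    (hne : ∀ r ∈ R, ∀ s ∈ S, (r ∪ s).Nonempty)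
    (k : ℕ) (lo hi : Fin k → ℕ)
    (hdisj : ∀ i j : Fin k, i ≠ j →
      ∀ n : ℕ, ¬(lo i ≤ n ∧ n ≤ hi i ∧ lo j ≤ n ∧ n ≤ hi j))
    (hcover : ∀ s ∈ S, ∃ i : Fin k, lo i ≤ s.card ∧ s.card ≤ hi i) :
    (⋃ i : Fin k,
        {p : Finset α × Finset α | p.1 ∈ R ∧ p.2 ∈ S ∧
          (lo i ≤ p.2.card ∧ p.2.card ≤ hi i) ∧
          (∃ n : ℕ, lo i ≤ n ∧ n ≤ hi i ∧
            ⌈t * (p.1.card : ℝ)⌉₊ ≤ n ∧ n ≤ ⌊(p.1.card : ℝ) / t⌋₊) ∧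
          jaccard p.1 p.2 ≥ t}) =
      {p : Finset α × Finset α | p.1 ∈ R ∧ p.2 ∈ S ∧ jaccard p.1 p.2 ≥ t} := by
  ext ⟨r, s⟩
  simp only [Set.mem_iUnion, Set.mem_setOf_eq]
  constructor
  · rintro ⟨i, hR, hS, _, _, hj⟩; exact ⟨hR, hS, hj⟩
  · rintro ⟨hR, hS, hj⟩
    obtain ⟨i, hlo, hhi⟩ := hcover s hS
    have hu : (0 : ℝ) < ((r ∪ s).card : ℝ) := by
      exact_mod_cast Finset.card_pos.mpr (hne r hR s hS)
    have key : t * ((r ∪ s).card : ℝ) ≤ ((r ∩ s).card : ℝ) := by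
      have := hj
      rw [jaccard, ge_iff_le, le_div_iff₀ hu] at this
      exact this
    refine ⟨i, hR, hS, ⟨hlo, hhi⟩, ⟨s.card, hlo, hhi, ?_, ?_⟩, hj⟩
    · rw [Nat.ceil_le]
      have h1 : ((r ∩ s).card : ℝ) ≤ (s.card : ℝ) := by
        exact_mod_cast Finset.card_le_card (Finset.inter_subset_right)
      have h2 : ((r.card : ℝ)) ≤ ((r ∪ s).card : ℝ) := by
        exact_mod_cast Finset.card_le_card (Finset.subset_union_left)
      nlinarith
    · rw [Nat.le_floor_iff (by positivity), le_div_iff₀ ht0]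
      have h1 : ((r ∩ s).card : ℝ) ≤ (r.card : ℝ) := by
        exact_mod_cast Finset.card_le_card (Finset.inter_subset_left)
      have h2 : ((s.card : ℝ)) ≤ ((r ∪ s).card : ℝ) := by
        exact_mod_cast Finset.card_le_card (Finset.subset_union_right)
      nlinarith
end

section
/- Let r and s be finite sets with r ∪ s nonempty, let t be a real number with 0 < t ≤ 1, and let λ_b ≤ λ_e be natural numbers with λ_b ≤ |s| ≤ λ_e. If the integer intervals [λ_b, λ_e] and [⌈t·|r|⌉, ⌊|r|/t⌋] are disjoint, then Jaccard(r,s) < t. -/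
open Finset

/-- Safety of not replicating `r` to a reducer whose length interval `[lo, hi]` does
not intersect the length-filter range `[⌈t·|r|⌉, ⌊|r|/t⌋]`: if `lo ≤ |s| ≤ hi` and
the two intervals are disjoint, then `Jaccard(r,s) < t`. -/
theorem no_replication_safe {α : Type*} [DecidableEq α] (r s : Finset α) (t : ℝ)
    (hne : (r ∪ s).Nonempty) (ht0 : 0 < t) (ht1 : t ≤ 1)
    (lo hi : ℕ) (hlohi : lo ≤ hi) (hsb : lo ≤ s.card) (hse : s.card ≤ hi)
    (hdisj : ¬∃ n : ℕ, lo ≤ n ∧ n ≤ hi ∧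
      ⌈t * (r.card : ℝ)⌉₊ ≤ n ∧ n ≤ ⌊(r.card : ℝ) / t⌋₊) :
    jaccard r s < t := by
  push_neg at hdisj
  have h := hdisj s.card hsb hse
  have hu : (0:ℝ) < ((r ∪ s).card : ℝ) := by
    exact_mod_cast card_pos.mpr hne
  have hrle : (r.card : ℝ) ≤ ((r ∪ s).card : ℝ) := by
    exact_mod_cast card_le_card (subset_union_left)
  have hsle : (s.card : ℝ) ≤ ((r ∪ s).card : ℝ) := by
    exact_mod_cast card_le_card (subset_union_right)
  rw [jaccard, div_lt_iff₀ hu]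
  rcases lt_or_ge s.card ⌈t * (r.card : ℝ)⌉₊ with hc | hc
  · have h1 : (s.card : ℝ) < t * r.card := Nat.lt_ceil.mp hc
    have h2 : ((r ∩ s).card : ℝ) ≤ s.card := by
      exact_mod_cast card_le_card (inter_subset_right)
    calc ((r ∩ s).card : ℝ) ≤ s.card := h2
      _ < t * r.card := h1
      _ ≤ t * (r ∪ s).card := by nlinarith
  · have hf : ⌊(r.card : ℝ) / t⌋₊ < s.card := h hc
    have h1 : (r.card : ℝ) / t < s.card :=
      (Nat.floor_lt (by positivity)).mp hf
    have h1' : (r.card : ℝ) < t * s.card := by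
      rw [div_lt_iff₀ ht0] at h1; nlinarith
    have h2 : ((r ∩ s).card : ℝ) ≤ r.card := by
      exact_mod_cast card_le_card (inter_subset_left)
    calc ((r ∩ s).card : ℝ) ≤ r.card := h2
      _ < t * s.card := h1'
      _ ≤ t * (r ∪ s).card := by nlinarith
end

section
/- Let R and S be finite collections of finite sets, let t be a real number with 0 < t ≤ 1, and assume every pair (r,s) ∈ R × S has r ∪ s nonempty. Then { (r,s) ∈ R × S : ⌈t·|r|⌉ ≤ |s| ≤ ⌊|r|/t⌋ and (1 + t)·|r ∩ s| ≥ t·(|r| + |s|) } = { (r,s) ∈ R × S : Jaccard(r,s) ≥ t }; that is, the pairs that pass the length filter and whose intersection count passes the verification test are exactly the pairs of the R-S set similarity join at threshold t. -/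
open Finset

/-- Overall output correctness of the single-stage filter-and-verification of
CF-RS-Join: the pairs passing the integer length filter and the verification test
`(1 + t)·|r ∩ s| ≥ t·(|r| + |s|)` are exactly the pairs of the R-S set similarity
join at threshold `t`. -/
theorem cf_rs_join_correct {α : Type*} [DecidableEq α]
    (R S : Finset (Finset α)) (t : ℝ) (ht0 : 0 < t) (ht1 : t ≤ 1)
    (hne : ∀ r ∈ R, ∀ s ∈ S, (r ∪ s).Nonempty) :
    {p : Finset α × Finset α | p.1 ∈ R ∧ p.2 ∈ S ∧
        (⌈t * (p.1.card : ℝ)⌉₊ ≤ p.2.card ∧ p.2.card ≤ ⌊(p.1.card : ℝ) / t⌋₊) ∧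
        (1 + t) * ((p.1 ∩ p.2).card : ℝ) ≥ t * ((p.1.card : ℝ) + (p.2.card : ℝ))} =
      {p : Finset α × Finset α | p.1 ∈ R ∧ p.2 ∈ S ∧ jaccard p.1 p.2 ≥ t} := by
  ext ⟨r, s⟩
  simp only [Set.mem_setOf_eq]
  constructor
  · rintro ⟨hR, hS, _, hver⟩
    refine ⟨hR, hS, ?_⟩
    have hU := hne r hR s hS
    have hUpos : (0:ℝ) < ((r ∪ s).card : ℝ) := by exact_mod_cast Finset.card_pos.2 hU
    have hcard : ((r ∪ s).card : ℝ) + ((r ∩ s).card : ℝ) = (r.card : ℝ) + (s.card : ℝ) := by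
      exact_mod_cast Finset.card_union_add_card_inter r s
    rw [jaccard, ge_iff_le, le_div_iff₀ hUpos]
    nlinarith
  · rintro ⟨hR, hS, hj⟩
    have hU := hne r hR s hS
    have hUpos : (0:ℝ) < ((r ∪ s).card : ℝ) := by exact_mod_cast Finset.card_pos.2 hU
    have hcard : ((r ∪ s).card : ℝ) + ((r ∩ s).card : ℝ) = (r.card : ℝ) + (s.card : ℝ) := by
      exact_mod_cast Finset.card_union_add_card_inter r s
    rw [jaccard, ge_iff_le, le_div_iff₀ hUpos] at hj
    have hIs : ((r ∩ s).card : ℝ) ≤ (s.card : ℝ) := by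
      exact_mod_cast Finset.card_le_card (Finset.inter_subset_right)
    have hIr : ((r ∩ s).card : ℝ) ≤ (r.card : ℝ) := by
      exact_mod_cast Finset.card_le_card (Finset.inter_subset_left)
    have hrU : (r.card : ℝ) ≤ ((r ∪ s).card : ℝ) := by
      exact_mod_cast Finset.card_le_card (Finset.subset_union_left)
    have hsU : (s.card : ℝ) ≤ ((r ∪ s).card : ℝ) := by
      exact_mod_cast Finset.card_le_card (Finset.subset_union_right)
    refine ⟨hR, hS, ⟨?_, ?_⟩, ?_⟩
    · exact Nat.ceil_le.2 (by nlinarith)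
    · exact Nat.le_floor (by rw [le_div_iff₀ ht0]; nlinarith)
    · nlinarith
end
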